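/- For isotropic elasticity tensors ℂ_e and ℂ_micro acting on symmetric matrices, the harmonic-type composition ℂ_macro = ℂ_micro·(ℂ_e + ℂ_micro)^{-1}·ℂ_e is again isotropic with shear modulus μ_macro = μ_e·μ_micro/(μ_e + μ_micro) and bulk-type modulus satisfying (2μ_macro + 3λ_macro) = (2μ_e+3λ_e)(2μ_micro+3λ_micro)/((2μ_e+3λ_e)+(2μ_micro+3λ_micro)). -/

import Mathlib

open Matrix

/-- Isotropic elasticity tensor acting on 3×3 matrices:
`ℂ S = λ · tr S · I + 2μ · S`. -/
noncomputable def isoTensor (l m : ℝ) (S : Matrix (Fin 3) (Fin 3) ℝ) :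
    Matrix (Fin 3) (Fin 3) ℝ :=
  (l * S.trace) • (1 : Matrix (Fin 3) (Fin 3) ℝ) + (2 * m) • S

/-- The harmonic composition `ℂ_macro = ℂ_micro (ℂ_e + ℂ_micro)⁻¹ ℂ_e` of two
positive-definite isotropic tensors is isotropic, with shear modulus
`μ_macro = μ_e μ_micro / (μ_e + μ_micro)` and bulk-type modulus satisfying
`2μ_macro + 3λ_macro = (2μ_e+3λ_e)(2μ_micro+3λ_micro)/((2μ_e+3λ_e)+(2μ_micro+3λ_micro))`. -/
theorem iso_macro_composition (le me lm mm : ℝ)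
    (hme : 0 < me) (hmm : 0 < mm)
    (hke : 0 < 2 * me + 3 * le) (hkm : 0 < 2 * mm + 3 * lm)
    (B : Matrix (Fin 3) (Fin 3) ℝ → Matrix (Fin 3) (Fin 3) ℝ)
    (hB₁ : ∀ S, Sᵀ = S → isoTensor le me (B S) + isoTensor lm mm (B S) = S)
    (hB₂ : ∀ S, Sᵀ = S → B (isoTensor le me S + isoTensor lm mm S) = S)
    (hBsym : ∀ S, Sᵀ = S → (B S)ᵀ = B S) :
    ∃ lmacro : ℝ,
      2 * (me * mm / (me + mm)) + 3 * lmacro =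
        (2 * me + 3 * le) * (2 * mm + 3 * lm) /
          ((2 * me + 3 * le) + (2 * mm + 3 * lm)) ∧
      ∀ S : Matrix (Fin 3) (Fin 3) ℝ, Sᵀ = S →
        isoTensor lm mm (B (isoTensor le me S)) =
          isoTensor lmacro (me * mm / (me + mm)) S := by
  have hM : (0:ℝ) < me + mm := by linarith
  have hK : (0:ℝ) < (2 * me + 3 * le) + (2 * mm + 3 * lm) := by linarith
  have hMne : (me + mm) ≠ 0 := hM.ne'
  have hKne : ((2 * me + 3 * le) + (2 * mm + 3 * lm)) ≠ 0 := hK.ne'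
  set L : ℝ := le + lm with hL
  set M : ℝ := me + mm with hMdef
  set K : ℝ := (2 * me + 3 * le) + (2 * mm + 3 * lm) with hKdef
  -- explicit inverse of the sum tensor
  have key : ∀ T : Matrix (Fin 3) (Fin 3) ℝ, Tᵀ = T →
      B T = (-(L) * T.trace / (2 * M * K)) • (1 : Matrix (Fin 3) (Fin 3) ℝ)
        + (2 * M)⁻¹ • T := by
    intro T hT
    set W : Matrix (Fin 3) (Fin 3) ℝ :=
      (-(L) * T.trace / (2 * M * K)) • (1 : Matrix (Fin 3) (Fin 3) ℝ)
        + (2 * M)⁻¹ • T with hW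
    have hWs : Wᵀ = W := by
      simp [hW, transpose_add, transpose_smul, transpose_one, hT]
    have htW : W.trace = T.trace / K := by
      simp [hW, Matrix.trace_add, Matrix.trace_smul, Matrix.trace_one,
        smul_eq_mul, Fintype.card_fin]
      field_simp
      ring
    have harg : isoTensor le me W + isoTensor lm mm W = T := by
      ext i j
      simp only [isoTensor, htW]
      simp only [hW, Matrix.add_apply, Matrix.smul_apply,
        Matrix.one_apply, smul_eq_mul]
      split_ifs with h
      · field_simp
        rw [hMdef]; ring
      · field_simp
        rw [hMdef]; ring
    have h2 := hB₂ W hWs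
    rw [harg] at h2
    exact h2
  refine ⟨(((2 * me + 3 * le) * (2 * mm + 3 * lm)) / K
      - 2 * (me * mm / M)) / 3, by rw [hKdef, hMdef]; ring, ?_⟩
  intro S hS
  have hs1 : (isoTensor le me S)ᵀ = isoTensor le me S := by
    simp [isoTensor, transpose_add, transpose_smul, transpose_one, hS]
  rw [key (isoTensor le me S) hs1]
  have htr1 : (isoTensor le me S).trace = (2 * me + 3 * le) * S.trace := by
    simp [isoTensor, Matrix.trace_add, Matrix.trace_smul, Matrix.trace_one,
      smul_eq_mul, Fintype.card_fin]
    ring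
  ext i j
  simp only [isoTensor, htr1, Matrix.trace_add, Matrix.trace_smul,
    Matrix.trace_one, Matrix.add_apply, Matrix.smul_apply, Matrix.one_apply,
    smul_eq_mul, Fintype.card_fin]
  split_ifs with h
  · field_simp
    rw [hMdef]; ring
  · field_simp
    rw [hMdef]; ring
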